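/- Let $a, A, M$ be positive integers and $Y \geq 3$ a real number, with $\gcd(a, A) = 1$ and $a + (M-1)A \leq Y$. Then $\sum_{m=0}^{M-1} d(a + mA) \leq 2M(1 + \frac{1}{2}\log Y) + 2\sqrt{Y}$. -/

import Mathlib

open Finset

/-! Pair each divisor `d > √n` of `n` with `n / d < √n`: then `d(n)` is at most twice the number of
divisors `h ≤ √N` of `n ≤ N`. Summing over the progression and swapping the sums, each `h` is counted
once for every `m < M` with `h ∣ a + m A`; since `gcd(h, A) = 1` for such `h`, these `m` form a single
residue class mod `h`, of size at most `M / h + 1`. The harmonic sum up to `√Y` gives the logarithm. -/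

namespace Nat

theorem card_divisors_le_two_mul_card_filter_dvd_Icc_sqrt {n N : ℕ} (hn : n ≤ N) :
    #n.divisors ≤ 2 * #{h ∈ Icc 1 N.sqrt | h ∣ n} := by
  set small := {h ∈ Icc 1 N.sqrt | h ∣ n}
  have hsmall {d : ℕ} (hd : d ∣ n) (hn0 : n ≠ 0) (hsq : d * d ≤ n) : d ∈ small := by
    have hd0 : 0 < d := Nat.pos_of_dvd_of_pos hd (Nat.pos_of_ne_zero hn0)
    exact mem_filter.2 ⟨mem_Icc.2 ⟨hd0, (Nat.le_sqrt.2 hsq).trans (Nat.sqrt_le_sqrt hn)⟩, hd⟩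
  have hcover : n.divisors ⊆ small ∪ small.image (n / ·) := by
    intro d hd
    obtain ⟨hdn, hn0⟩ := Nat.mem_divisors.1 hd
    rcases le_total (d * d) n with hsq | hsq
    · exact mem_union_left _ (hsmall hdn hn0 hsq)
    · refine mem_union_right _ (mem_image.2 ⟨n / d, ?_, Nat.div_div_self hdn hn0⟩)
      refine hsmall (Nat.div_dvd_of_dvd hdn) hn0 ?_
      calc n / d * (n / d) ≤ n / d * d :=
            Nat.mul_le_mul_left _ (Nat.div_le_of_le_mul hsq)
        _ = n := Nat.div_mul_cancel hdn
  calc #n.divisors ≤ #small + #(small.image (n / ·)) :=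
        (card_le_card hcover).trans (card_union_le _ _)
    _ ≤ 2 * #small := by rw [two_mul]; exact Nat.add_le_add_left Finset.card_image_le _

theorem ModEq.of_dvd_add_mul_of_dvd_add_mul {a A h x y : ℕ} (hcop : a.Coprime A)
    (hx : h ∣ a + x * A) (hy : h ∣ a + y * A) : x ≡ y [MOD h] := by
  have hhA : h.Coprime A :=
    Nat.Coprime.coprime_dvd_left hx ((Nat.coprime_add_mul_right_left a A x).2 hcop)
  refine Nat.ModEq.cancel_right_of_coprime hhA (Nat.ModEq.add_left_cancel' a ?_)
  exact ((Nat.modEq_zero_iff_dvd).2 hx).trans ((Nat.modEq_zero_iff_dvd).2 hy).symm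

theorem card_le_div_add_one_of_modEq {s : Finset ℕ} {M h : ℕ} (hs : s ⊆ range M)
    (hmod : ∀ x ∈ s, ∀ y ∈ s, x ≡ y [MOD h]) : #s ≤ M / h + 1 := by
  calc #s ≤ #(range (M / h + 1)) := by
        refine card_le_card_of_injOn (· / h) (fun m hm => ?_) (fun x hx y hy hxy => ?_)
        · exact mem_range.2 (Nat.lt_succ_of_le (Nat.div_le_div_right (mem_range.1 (hs hm)).le))
        · rw [← Nat.div_add_mod x h, ← Nat.div_add_mod y h]
          simp only at hxy
          rw [hxy, hmod x hx y hy]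
    _ = M / h + 1 := card_range _

theorem card_filter_dvd_add_mul_le {a A : ℕ} (hcop : a.Coprime A) (M h : ℕ) :
    #{m ∈ range M | h ∣ a + m * A} ≤ M / h + 1 :=
  card_le_div_add_one_of_modEq (filter_subset _ _) fun _ hx _ hy =>
    ModEq.of_dvd_add_mul_of_dvd_add_mul hcop (mem_filter.1 hx).2 (mem_filter.1 hy).2

end Nat

theorem Finset.sum_card_divisors_le_two_mul_sum_card_filter_dvd {ι : Type*} (s : Finset ι)
    (f : ι → ℕ) {N : ℕ} (hf : ∀ i ∈ s, f i ≤ N) :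
    ∑ i ∈ s, #(f i).divisors ≤ 2 * ∑ h ∈ Icc 1 N.sqrt, #{i ∈ s | h ∣ f i} := by
  calc ∑ i ∈ s, #(f i).divisors ≤ ∑ i ∈ s, 2 * #{h ∈ Icc 1 N.sqrt | h ∣ f i} :=
        sum_le_sum fun i hi => Nat.card_divisors_le_two_mul_card_filter_dvd_Icc_sqrt (hf i hi)
    _ = 2 * ∑ h ∈ Icc 1 N.sqrt, #{i ∈ s | h ∣ f i} := by
        simp only [← mul_sum, card_filter]
        rw [sum_comm]

theorem sum_Icc_div_add_one_le (M H : ℕ) :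
    ∑ h ∈ Icc 1 H, ((M : ℝ) / h + 1) ≤ M * (1 + Real.log H) + H := by
  have hharm : ∑ h ∈ Icc 1 H, (1 : ℝ) / h ≤ 1 + Real.log H := by
    simpa [harmonic_eq_sum_Icc] using harmonic_le_one_add_log H
  calc ∑ h ∈ Icc 1 H, ((M : ℝ) / h + 1) = M * ∑ h ∈ Icc 1 H, (1 : ℝ) / h + H := by
        simp [sum_add_distrib, mul_sum, div_eq_mul_inv]
    _ ≤ M * (1 + Real.log H) + H := by gcongr

theorem divisor_sum_arith_prog_bound_general (a A M : ℕ) (Y : ℝ) (hY : 3 ≤ Y) (hcop : Nat.gcd a A = 1)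
    (hle : ((a + (M - 1) * A : ℕ) : ℝ) ≤ Y) :
    ∑ m ∈ Finset.range M, ((a + m * A).divisors.card : ℝ)
      ≤ 2 * M * (1 + Real.log Y / 2) + 2 * Real.sqrt Y := by
  set H := (a + (M - 1) * A).sqrt
  have hterm : ∀ m ∈ range M, a + m * A ≤ a + (M - 1) * A := fun m hm => by
    gcongr; exact Nat.le_sub_one_of_lt (mem_range.1 hm)
  have hH : (H : ℝ) ≤ √Y := Real.nat_sqrt_le_real_sqrt.trans (Real.sqrt_le_sqrt hle)
  have hlogH : Real.log H ≤ Real.log Y / 2 := by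
    rw [← Real.log_sqrt (by linarith)]
    rcases H.eq_zero_or_pos with h0 | hpos
    · simp [h0, Real.log_nonneg, Real.one_le_sqrt.2 (by linarith : (1 : ℝ) ≤ Y)]
    · exact Real.log_le_log (by exact_mod_cast hpos) hH
  have hcount (h : ℕ) : (#{m ∈ range M | h ∣ a + m * A} : ℝ) ≤ M / h + 1 := by
    calc (#{m ∈ range M | h ∣ a + m * A} : ℝ) ≤ ((M / h : ℕ) : ℝ) + 1 := by
          exact_mod_cast Nat.card_filter_dvd_add_mul_le hcop M h
      _ ≤ M / h + 1 := by gcongr; exact Nat.cast_div_le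
  calc ∑ m ∈ range M, (#(a + m * A).divisors : ℝ)
      ≤ 2 * ∑ h ∈ Icc 1 H, (#{m ∈ range M | h ∣ a + m * A} : ℝ) := by
        exact_mod_cast sum_card_divisors_le_two_mul_sum_card_filter_dvd _ _ hterm
    _ ≤ 2 * ∑ h ∈ Icc 1 H, ((M : ℝ) / h + 1) := by gcongr with h; exact hcount h
    _ ≤ 2 * (M * (1 + Real.log H) + H) := by gcongr; exact sum_Icc_div_add_one_le M H
    _ ≤ 2 * M * (1 + Real.log Y / 2) + 2 * √Y := by nlinarith [(M.cast_nonneg : (0:ℝ) ≤ M)]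

theorem divisor_sum_arith_prog_bound (a A M : ℕ) (Y : ℝ) (ha : 0 < a) (hA : 0 < A)
    (hM : 0 < M) (hY : 3 ≤ Y) (hcop : Nat.gcd a A = 1)
    (hle : ((a + (M - 1) * A : ℕ) : ℝ) ≤ Y) :
    ∑ m ∈ Finset.range M, ((a + m * A).divisors.card : ℝ)
      ≤ 2 * M * (1 + Real.log Y / 2) + 2 * Real.sqrt Y :=
  divisor_sum_arith_prog_bound_general a A M Y hY hcop hle
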